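/- arXiv:1608.07566 — 7 statements merged into one kernel-verified Lean document; each statement's English description precedes it below -/
import Mathlib

section
/- Let (X,d) be a Ptolemaic metric space, let x₀ ∈ X be a fixed point, and let α > 0, β ≥ 0 and p ≥ 1 be real numbers. Then the function H_{x₀}(x,y) := d(x,y) / ((α + β·d(x,x₀)^p)^{1/p} · (α + β·d(y,x₀)^p)^{1/p}) is a metric on X: it is nonnegative, symmetric, vanishes exactly when x = y, and satisfies the triangle inequality H_{x₀}(x,z) ≤ H_{x₀}(x,y) + H_{x₀}(y,z) for all x, y, z ∈ X. -/
/-- Two-term weighted Minkowski inequality. -/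
lemma weighted_mink {p α β : ℝ} (hp : 1 ≤ p) (hα : 0 ≤ α) (hβ : 0 ≤ β)
    {u₁ v₁ u₂ v₂ : ℝ} (hu₁ : 0 ≤ u₁) (hv₁ : 0 ≤ v₁) (hu₂ : 0 ≤ u₂) (hv₂ : 0 ≤ v₂) :
    (α * (u₁ + u₂) ^ p + β * (v₁ + v₂) ^ p) ^ (1 / p) ≤
      (α * u₁ ^ p + β * v₁ ^ p) ^ (1 / p) + (α * u₂ ^ p + β * v₂ ^ p) ^ (1 / p) := by
  have hp0 : (0 : ℝ) < p := lt_of_lt_of_le one_pos hp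
  have key := Real.Lp_add_le (Finset.univ : Finset (Fin 2))
    ![α ^ (1 / p) * u₁, β ^ (1 / p) * v₁] ![α ^ (1 / p) * u₂, β ^ (1 / p) * v₂] hp
  have hαp : (α ^ (1 / p)) ^ p = α := by
    rw [one_div, Real.rpow_inv_rpow hα hp0.ne']
  have hβp : (β ^ (1 / p)) ^ p = β := by
    rw [one_div, Real.rpow_inv_rpow hβ hp0.ne']
  have habs : ∀ w : ℝ, 0 ≤ w → ∀ c : ℝ, 0 ≤ c → |c * w| ^ p = c ^ p * w ^ p := by
    intro w hw c hc
    rw [abs_of_nonneg (by positivity), Real.mul_rpow hc hw]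
  simp only [Fin.sum_univ_two, Matrix.cons_val_zero, Matrix.cons_val_one, Matrix.head_cons]
    at key
  have hca : (0:ℝ) ≤ α ^ (1/p) := Real.rpow_nonneg hα _
  have hcb : (0:ℝ) ≤ β ^ (1/p) := Real.rpow_nonneg hβ _
  rw [show α ^ (1/p) * u₁ + α ^ (1/p) * u₂ = α ^ (1/p) * (u₁ + u₂) by ring,
      show β ^ (1/p) * v₁ + β ^ (1/p) * v₂ = β ^ (1/p) * (v₁ + v₂) by ring] at key
  rw [habs _ (by linarith) _ hca, habs _ (by linarith) _ hcb,
      habs _ hu₁ _ hca, habs _ hv₁ _ hcb, habs _ hu₂ _ hca, habs _ hv₂ _ hcb,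
      hαp, hβp] at key
  exact key

/-- Let `(X,d)` be a Ptolemaic metric space, `x₀ ∈ X`, and let
`α > 0`, `β ≥ 0`, `p ≥ 1` be real numbers.  Then
`H_{x₀}(x,y) = d(x,y) / ((α + β d(x,x₀)^p)^{1/p} (α + β d(y,x₀)^p)^{1/p})`
is a metric on `X`. -/
theorem statement0 {X : Type*} [MetricSpace X]
    (hPt : ∀ x y z t : X, dist x y * dist z t ≤ dist x z * dist y t + dist x t * dist y z)
    (x₀ : X) (α β p : ℝ) (hα : 0 < α) (hβ : 0 ≤ β) (hp : 1 ≤ p)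
    (H : X → X → ℝ)
    (hH : ∀ x y : X, H x y =
      dist x y /
        ((α + β * dist x x₀ ^ p) ^ (1 / p) * (α + β * dist y x₀ ^ p) ^ (1 / p))) :
    (∀ x y : X, 0 ≤ H x y) ∧
    (∀ x y : X, H x y = H y x) ∧
    (∀ x y : X, H x y = 0 ↔ x = y) ∧
    (∀ x y z : X, H x z ≤ H x y + H y z) := by
  have hp0 : (0 : ℝ) < p := lt_of_lt_of_le one_pos hp
  set g : X → ℝ := fun x => (α + β * dist x x₀ ^ p) ^ (1 / p) with hg
  have hgpos : ∀ x : X, 0 < g x := by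
    intro x
    have h1 : (0:ℝ) ≤ dist x x₀ ^ p := Real.rpow_nonneg dist_nonneg _
    exact Real.rpow_pos_of_pos (by nlinarith [mul_nonneg hβ h1]) _
  -- key multiplication identity
  have hmul : ∀ u v : ℝ, 0 ≤ u → 0 ≤ v →
      u * (α + β * v ^ p) ^ (1 / p) = (α * u ^ p + β * (u * v) ^ p) ^ (1 / p) := by
    intro u v hu hv
    have h1 : (0:ℝ) ≤ v ^ p := Real.rpow_nonneg hv _
    have h2 : (0:ℝ) ≤ α + β * v ^ p := by nlinarith [mul_nonneg hβ h1]
    rw [Real.mul_rpow hu hv,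
        show α * u ^ p + β * (u ^ p * v ^ p) = u ^ p * (α + β * v ^ p) by ring,
        Real.mul_rpow (Real.rpow_nonneg hu _) h2, one_div,
        Real.rpow_rpow_inv hu hp0.ne']
  -- key inequality
  have key : ∀ x y z : X, dist x z * g y ≤ dist x y * g z + dist y z * g x := by
    intro x y z
    have hPt' : dist x z * dist y x₀ ≤ dist x y * dist z x₀ + dist x x₀ * dist y z := by
      have := hPt x z y x₀
      rwa [dist_comm z y] at this
    have htri : dist x z ≤ dist x y + dist y z := dist_triangle x y z
    rw [show g y = (α + β * dist y x₀ ^ p) ^ (1/p) from rfl] at *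
    rw [hmul _ _ dist_nonneg dist_nonneg]
    have step1 : (α * dist x z ^ p + β * (dist x z * dist y x₀) ^ p) ^ (1 / p) ≤
        (α * (dist x y + dist y z) ^ p +
          β * (dist x y * dist z x₀ + dist y z * dist x x₀) ^ p) ^ (1 / p) := by
      apply Real.rpow_le_rpow (by positivity) _ (by positivity)
      have e1 : dist x z ^ p ≤ (dist x y + dist y z) ^ p :=
        Real.rpow_le_rpow dist_nonneg htri hp0.le
      have e2 : (dist x z * dist y x₀) ^ p ≤
          (dist x y * dist z x₀ + dist y z * dist x x₀) ^ p := by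
        apply Real.rpow_le_rpow (by positivity) _ hp0.le
        nlinarith [dist_nonneg (x := x) (y := x₀), dist_nonneg (x := y) (y := z)]
      nlinarith [mul_le_mul_of_nonneg_left e1 hα.le, mul_le_mul_of_nonneg_left e2 hβ]
    have step2 : (α * (dist x y + dist y z) ^ p +
          β * (dist x y * dist z x₀ + dist y z * dist x x₀) ^ p) ^ (1 / p) ≤
        (α * dist x y ^ p + β * (dist x y * dist z x₀) ^ p) ^ (1 / p) +
        (α * dist y z ^ p + β * (dist y z * dist x x₀) ^ p) ^ (1 / p) := by
      exact weighted_mink hp hα.le hβ dist_nonneg (by positivity) dist_nonneg (by positivity)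
    rw [show g z = (α + β * dist z x₀ ^ p) ^ (1/p) from rfl,
        show g x = (α + β * dist x x₀ ^ p) ^ (1/p) from rfl,
        hmul _ _ dist_nonneg dist_nonneg, hmul _ _ dist_nonneg dist_nonneg]
    exact le_trans step1 step2
  refine ⟨?_, ?_, ?_, ?_⟩
  · intro x y
    rw [hH]
    have := hgpos x; have := hgpos y
    positivity
  · intro x y
    rw [hH, hH, dist_comm, mul_comm]
  · intro x y
    rw [hH]
    have hne : (α + β * dist x x₀ ^ p) ^ (1 / p) * (α + β * dist y x₀ ^ p) ^ (1 / p) ≠ 0 :=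
      ne_of_gt (mul_pos (hgpos x) (hgpos y))
    constructor
    · intro h
      rcases div_eq_zero_iff.mp h with h' | h'
      · exact dist_eq_zero.mp h'
      · exact absurd h' hne
    · rintro rfl
      simp
  · intro x y z
    rw [hH, hH, hH]
    have hx := hgpos x; have hy := hgpos y; have hz := hgpos z
    rw [div_add_div _ _ (ne_of_gt (mul_pos hx hy)) (ne_of_gt (mul_pos hy hz)),
        div_le_div_iff₀ (mul_pos hx hz) (mul_pos (mul_pos hx hy) (mul_pos hy hz))]
    have k := key x y z
    nlinarith [mul_le_mul_of_nonneg_right k (le_of_lt (mul_pos hx (mul_pos hy hz))),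
      mul_pos hx hy, mul_pos hy hz, mul_pos hx hz]
end

section
/- Let (X,d) be a Ptolemaic metric space and x₀ ∈ X a fixed point. Then the chordal function h_{x₀}(x,y) := d(x,y) / (√(1 + d(x,x₀)²) · √(1 + d(y,x₀)²)) is a metric on X: it is nonnegative, symmetric, vanishes exactly when x = y, and satisfies the triangle inequality h_{x₀}(x,z) ≤ h_{x₀}(x,y) + h_{x₀}(y,z) for all x, y, z ∈ X. -/
lemma chordal_key (p q a b c D : ℝ) (hp : 0 ≤ p) (hq : 0 ≤ q) (ha : 0 ≤ a)
    (hb : 0 ≤ b) (hc : 0 ≤ c) (hD : 0 ≤ D)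
    (h1 : D ≤ p + q) (h2 : D * b ≤ p * c + q * a) :
    D * Real.sqrt (1 + b ^ 2) ≤ p * Real.sqrt (1 + c ^ 2) + q * Real.sqrt (1 + a ^ 2) := by
  set A := Real.sqrt (1 + a ^ 2) with hA
  set B := Real.sqrt (1 + b ^ 2) with hB
  set C := Real.sqrt (1 + c ^ 2) with hC
  have hA0 : 0 ≤ A := Real.sqrt_nonneg _
  have hB0 : 0 ≤ B := Real.sqrt_nonneg _
  have hC0 : 0 ≤ C := Real.sqrt_nonneg _
  have hAsq : A ^ 2 = 1 + a ^ 2 := Real.sq_sqrt (by positivity)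
  have hBsq : B ^ 2 = 1 + b ^ 2 := Real.sq_sqrt (by positivity)
  have hCsq : C ^ 2 = 1 + c ^ 2 := Real.sq_sqrt (by positivity)
  clear_value A B C
  have hCA : 1 + a * c ≤ C * A := by
    have h1' : (1 + a * c) ^ 2 ≤ (C * A) ^ 2 := by
      have : (C * A) ^ 2 = (1 + c ^ 2) * (1 + a ^ 2) := by
        rw [mul_pow, hAsq, hCsq]
      rw [this]; nlinarith [sq_nonneg (a - c)]
    have h2' : 0 ≤ 1 + a * c := by positivity
    nlinarith [mul_nonneg hC0 hA0]
  have hsq : (D * B) ^ 2 ≤ (p * C + q * A) ^ 2 := by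
    have : (D * B) ^ 2 = D ^ 2 + (D * b) ^ 2 := by rw [mul_pow, hBsq]; ring
    have e1 : D * D ≤ (p + q) * (p + q) := mul_le_mul h1 h1 hD (by positivity)
    have e2 : (D * b) * (D * b) ≤ (p * c + q * a) * (p * c + q * a) :=
      mul_le_mul h2 h2 (mul_nonneg hD hb) (by positivity)
    have expand : (p * C + q * A) ^ 2
        = p ^ 2 + (p * c) ^ 2 + q ^ 2 + (q * a) ^ 2 + 2 * (p * q) * (C * A) := by
      linear_combination p ^ 2 * hCsq + q ^ 2 * hAsq
    nlinarith [mul_le_mul_of_nonneg_left hCA (mul_nonneg hp hq)]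
  have hrhs : 0 ≤ p * C + q * A := by positivity
  nlinarith [mul_nonneg hD hB0]

/-- Let `(X,d)` be a Ptolemaic metric space and `x₀ ∈ X`.  Then the
chordal function `h_{x₀}(x,y) = d(x,y)/(√(1+d(x,x₀)²)·√(1+d(y,x₀)²))` is a metric on `X`. -/
theorem statement1 {X : Type*} [MetricSpace X]
    (hPt : ∀ x y z t : X, dist x y * dist z t ≤ dist x z * dist y t + dist x t * dist y z)
    (x₀ : X) (h : X → X → ℝ)
    (hh : ∀ x y : X, h x y =
      dist x y /
        (Real.sqrt (1 + dist x x₀ ^ 2) * Real.sqrt (1 + dist y x₀ ^ 2))) :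
    (∀ x y : X, 0 ≤ h x y) ∧
    (∀ x y : X, h x y = h y x) ∧
    (∀ x y : X, h x y = 0 ↔ x = y) ∧
    (∀ x y z : X, h x z ≤ h x y + h y z) := by
  have hs : ∀ x : X, 0 < Real.sqrt (1 + dist x x₀ ^ 2) := fun x =>
    Real.sqrt_pos.mpr (by positivity)
  refine ⟨?_, ?_, ?_, ?_⟩
  · intro x y; rw [hh]; positivity
  · intro x y; rw [hh, hh, dist_comm x y, mul_comm]
  · intro x y
    rw [hh, div_eq_zero_iff]
    constructor
    · rintro (h0 | h0)
      · exact dist_eq_zero.mp h0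
      · exact absurd h0 (ne_of_gt (mul_pos (hs x) (hs y)))
    · rintro rfl; left; exact dist_self x
  · intro x y z
    rw [hh, hh, hh]
    have hA := hs x
    have hB := hs y
    have hC := hs z
    have hkey := chordal_key (dist x y) (dist y z) (dist x x₀) (dist y x₀) (dist z x₀)
      (dist x z) dist_nonneg dist_nonneg dist_nonneg dist_nonneg dist_nonneg dist_nonneg
      (dist_triangle x y z) ?_
    · rw [div_add_div _ _ (mul_pos hA hB).ne' (mul_pos hB hC).ne',
        div_le_div_iff₀ (mul_pos hA hC) (mul_pos (mul_pos hA hB) (mul_pos hB hC))]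
      nlinarith [mul_le_mul_of_nonneg_left hkey
        (mul_nonneg hB.le (mul_nonneg hA.le hC.le)), mul_pos hA hC, mul_pos hB hC]
    · have := hPt x z y x₀
      rw [dist_comm z y] at this
      linarith
end

section
/- Let (X,d) be a Ptolemaic metric space, let x₀ ∈ X, and let α > 0, β ≥ 0 and p ≥ 1 be real numbers. Then for all x, y, z ∈ X one has d(x,y)·(α + β·d(x₀,z)^p)^{1/p} + d(y,z)·(α + β·d(x₀,x)^p)^{1/p} ≥ d(x,z)·(α + β·d(y,x₀)^p)^{1/p}. -/
/-- Pull a nonnegative factor inside an `rpow` root. -/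
lemma aux_mul_rpow {p : ℝ} (hp0 : p ≠ 0) {u A : ℝ} (hu : 0 ≤ u) (hA : 0 ≤ A) :
    u * A ^ (1 / p) = (u ^ p * A) ^ (1 / p) := by
  rw [Real.mul_rpow (Real.rpow_nonneg hu p) hA, ← Real.rpow_mul hu, mul_one_div,
    div_self hp0, Real.rpow_one]

/-- In a Ptolemaic metric space `(X,d)` with `x₀ ∈ X` and real numbers
`α > 0`, `β ≥ 0`, `p ≥ 1`, for all `x, y, z ∈ X` one has
`d(x,y)(α+β d(x₀,z)^p)^{1/p} + d(y,z)(α+β d(x₀,x)^p)^{1/p} ≥ d(x,z)(α+β d(y,x₀)^p)^{1/p}`. -/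
theorem statement2 {X : Type*} [MetricSpace X]
    (hPt : ∀ x y z t : X, dist x y * dist z t ≤ dist x z * dist y t + dist x t * dist y z)
    (x₀ : X) (α β p : ℝ) (hα : 0 < α) (hβ : 0 ≤ β) (hp : 1 ≤ p) :
    ∀ x y z : X,
      dist x z * (α + β * dist y x₀ ^ p) ^ (1 / p) ≤
        dist x y * (α + β * dist x₀ z ^ p) ^ (1 / p) +
          dist y z * (α + β * dist x₀ x ^ p) ^ (1 / p) := by
  intro x y z
  have hp0 : p ≠ 0 := by positivity
  set a := dist x y with ha
  set b := dist y z with hb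
  set c := dist x z with hc
  set tx := dist x₀ x with htx
  set ty := dist y x₀ with hty
  set tz := dist x₀ z with htz
  have ha0 : 0 ≤ a := dist_nonneg
  have hb0 : 0 ≤ b := dist_nonneg
  have hc0 : 0 ≤ c := dist_nonneg
  have htx0 : 0 ≤ tx := dist_nonneg
  have hty0 : 0 ≤ ty := dist_nonneg
  have htz0 : 0 ≤ tz := dist_nonneg
  -- triangle and Ptolemy
  have htri : c ≤ a + b := dist_triangle x y z
  have hptol : c * ty ≤ a * tz + b * tx := by
    have := hPt x z y x₀
    rw [dist_comm z x₀, dist_comm x x₀, dist_comm z y] at this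
    linarith
  -- the vectors for Minkowski
  set αr := α ^ (1 / p) with hαr
  set βr := β ^ (1 / p) with hβr
  have hαr0 : 0 ≤ αr := Real.rpow_nonneg hα.le _
  have hβr0 : 0 ≤ βr := Real.rpow_nonneg hβ _
  have hαp : αr ^ p = α := by
    rw [hαr, ← Real.rpow_mul hα.le, one_div_mul_cancel hp0, Real.rpow_one]
  have hβp : βr ^ p = β := by
    rw [hβr, ← Real.rpow_mul hβ, one_div_mul_cancel hp0, Real.rpow_one]
  set f : Fin 2 → ℝ := ![αr * a, βr * (a * tz)] with hf
  set g : Fin 2 → ℝ := ![αr * b, βr * (b * tx)] with hg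
  have hfn : ∀ i ∈ Finset.univ, 0 ≤ f i := by
    intro i _; fin_cases i <;> simp [hf] <;> positivity
  have hgn : ∀ i ∈ Finset.univ, 0 ≤ g i := by
    intro i _; fin_cases i <;> simp [hg] <;> positivity
  have mink := Real.Lp_add_le_of_nonneg (s := Finset.univ) (f := f) (g := g) hp hfn hgn
  rw [Fin.sum_univ_two, Fin.sum_univ_two, Fin.sum_univ_two] at mink
  simp only [hf, hg, Matrix.cons_val_zero, Matrix.cons_val_one, Matrix.head_cons] at mink
  -- rewrite each side
  have key : ∀ u t : ℝ, 0 ≤ u → 0 ≤ t →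
      u * (α + β * t ^ p) ^ (1 / p) = ((αr * u) ^ p + (βr * (u * t)) ^ p) ^ (1 / p) := by
    intro u t hu ht
    rw [aux_mul_rpow hp0 hu (by positivity)]
    congr 1
    rw [Real.mul_rpow hαr0 hu, Real.mul_rpow hβr0 (by positivity), hαp, hβp,
      Real.mul_rpow hu ht]
    ring
  rw [key a tz ha0 htz0, key b tx hb0 htx0, key c ty hc0 hty0]
  refine le_trans ?_ mink
  apply Real.rpow_le_rpow (by positivity) _ (by positivity)
  have h1 : (αr * c) ^ p ≤ (αr * a + αr * b) ^ p := by
    apply Real.rpow_le_rpow (by positivity) _ (by positivity)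
    rw [← mul_add]; exact mul_le_mul_of_nonneg_left htri hαr0
  have h2 : (βr * (c * ty)) ^ p ≤ (βr * (a * tz) + βr * (b * tx)) ^ p := by
    apply Real.rpow_le_rpow (by positivity) _ (by positivity)
    rw [← mul_add]; exact mul_le_mul_of_nonneg_left hptol hβr0
  exact add_le_add h1 h2
end

section
/- Let (X,d) be a Ptolemaic metric space, x₀ ∈ X, and let a > 0. Let F be a nondegenerate continuum in X, let C be a continuum contained in X \ F with chordal diameter h_{x₀}(C) ≥ a, and let R > 0 be a number such that the chordal diameter of X \ B(x₀,R) is less than a/2. Then there exists a continuum C₁ ⊆ C ∩ cl(B(x₀,R)) such that h_{x₀}(C₁) ≥ a/4. -/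
lemma statement8_sqrt_one_le (d : ℝ) : (1:ℝ) ≤ Real.sqrt (1 + d^2) := by
  rw [Real.le_sqrt zero_le_one (by positivity)]; nlinarith [sq_nonneg d]

lemma statement8_le_sqrt_self (d : ℝ) (hd : 0 ≤ d) : d ≤ Real.sqrt (1 + d^2) := by
  rw [Real.le_sqrt hd (by positivity)]; linarith

lemma statement8_cs_sqrt (a b : ℝ) (ha : 0 ≤ a) (hb : 0 ≤ b) :
    1 + a*b ≤ Real.sqrt (1+a^2) * Real.sqrt (1+b^2) := by
  rw [← Real.sqrt_mul (by positivity), Real.le_sqrt (by positivity) (by positivity)]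
  nlinarith [sq_nonneg (a-b)]

lemma statement8_key_alg (A B C av bv cv : ℝ) (hA : 0 ≤ A) (hB : 0 ≤ B) (hC : 0 ≤ C)
    (hav : 0 ≤ av) (hbv : 0 ≤ bv) (hcv : 0 ≤ cv)
    (h1 : A ≤ B + C) (h2 : A * cv ≤ B * bv + C * av) :
    A * Real.sqrt (1+cv^2) ≤ B * Real.sqrt (1+bv^2) + C * Real.sqrt (1+av^2) := by
  set sa := Real.sqrt (1+av^2) with hsa
  set sb := Real.sqrt (1+bv^2) with hsb
  set sc := Real.sqrt (1+cv^2) with hsc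
  have hsa2 : sa^2 = 1 + av^2 := Real.sq_sqrt (by positivity)
  have hsb2 : sb^2 = 1 + bv^2 := Real.sq_sqrt (by positivity)
  have hsc2 : sc^2 = 1 + cv^2 := Real.sq_sqrt (by positivity)
  have hsa0 : 0 ≤ sa := Real.sqrt_nonneg _
  have hsb0 : 0 ≤ sb := Real.sqrt_nonneg _
  have hsc0 : 0 ≤ sc := Real.sqrt_nonneg _
  have hcs : 1 + av*bv ≤ sa * sb := statement8_cs_sqrt av bv hav hbv
  have hsq : (A * sc)^2 ≤ (B * sb + C * sa)^2 := by
    have e1 : (A*sc)^2 = A^2 + (A*cv)^2 := by rw [mul_pow, hsc2]; ring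
    have e2 : A^2 ≤ (B+C)^2 := by nlinarith
    have e3 : (A*cv)^2 ≤ (B*bv + C*av)^2 := by nlinarith [mul_nonneg hA hcv]
    have e4 : (B+C)^2 + (B*bv+C*av)^2 ≤ (B*sb + C*sa)^2 := by
      have h5 : B*C*(1+av*bv) ≤ B*C*(sa*sb) :=
        mul_le_mul_of_nonneg_left hcs (mul_nonneg hB hC)
      have eb : B^2*sb^2 = B^2*(1+bv^2) := by rw [hsb2]
      have ea : C^2*sa^2 = C^2*(1+av^2) := by rw [hsa2]
      nlinarith [h5, eb, ea]
    linarith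
  have h0 : 0 ≤ A * sc := mul_nonneg hA hsc0
  have h0' : 0 ≤ B * sb + C * sa := by positivity
  have := Real.sqrt_le_sqrt hsq
  rwa [Real.sqrt_sq h0, Real.sqrt_sq h0'] at this

lemma statement8_chordal_tri {X : Type*} [MetricSpace X]
    (hPt : ∀ x y z t : X, dist x y * dist z t ≤ dist x z * dist y t + dist x t * dist y z)
    (x₀ x y z : X) :
    dist x y / (Real.sqrt (1 + dist x x₀ ^ 2) * Real.sqrt (1 + dist y x₀ ^ 2)) ≤
      dist x z / (Real.sqrt (1 + dist x x₀ ^ 2) * Real.sqrt (1 + dist z x₀ ^ 2)) +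
      dist z y / (Real.sqrt (1 + dist z x₀ ^ 2) * Real.sqrt (1 + dist y x₀ ^ 2)) := by
  set sa := Real.sqrt (1 + dist x x₀ ^ 2) with hsa
  set sb := Real.sqrt (1 + dist y x₀ ^ 2) with hsb
  set sc := Real.sqrt (1 + dist z x₀ ^ 2) with hsc
  have ha0 : 0 < sa := Real.sqrt_pos.mpr (by positivity)
  have hb0 : 0 < sb := Real.sqrt_pos.mpr (by positivity)
  have hc0 : 0 < sc := Real.sqrt_pos.mpr (by positivity)
  have key : dist x y * sc ≤ dist x z * sb + dist z y * sa := by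
    apply statement8_key_alg _ _ _ _ _ _ dist_nonneg dist_nonneg dist_nonneg
      dist_nonneg dist_nonneg dist_nonneg (dist_triangle x z y)
    have := hPt x y z x₀
    rw [dist_comm z y]
    linarith [this]
  rw [div_add_div _ _ (by positivity) (by positivity),
    div_le_div_iff₀ (by positivity) (by positivity)]
  nlinarith [mul_le_mul_of_nonneg_left key (le_of_lt (mul_pos (mul_pos ha0 hb0) hc0))]

lemma statement8_bump {X : Type*} [MetricSpace X] {C : Set X} (hC : IsCompact C)
    (hconn : IsConnected C) {x₀ : X} {R : ℝ} {p : X} (hp : p ∈ C)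
    (hpb : p ∈ Metric.ball x₀ R)
    (hw : ∃ w ∈ C, w ∉ closure (Metric.ball x₀ R)) :
    ∃ D, IsCompact D ∧ IsConnected D ∧ D ⊆ C ∩ closure (Metric.ball x₀ R) ∧
      p ∈ D ∧ ∃ z ∈ D, z ∉ Metric.ball x₀ R := by
  set B := Metric.ball x₀ R with hB
  set F := C ∩ closure B with hF
  have hFc : IsCompact F := hC.inter_right isClosed_closure
  haveI : CompactSpace ↥F := isCompact_iff_compactSpace.mp hFc
  have hpF : p ∈ F := ⟨hp, subset_closure hpb⟩
  set p' : ↥F := ⟨p, hpF⟩ with hp'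
  set D' : Set ↥F := connectedComponent p' with hD'
  set D : Set X := Subtype.val '' D' with hD
  have hD'conn : IsConnected D' := isConnected_connectedComponent
  have hD'closed : IsClosed D' := isClosed_connectedComponent
  have hD'comp : IsCompact D' := hD'closed.isCompact
  have hDcomp : IsCompact D := hD'comp.image continuous_subtype_val
  have hDconn : IsConnected D := hD'conn.image _ continuous_subtype_val.continuousOn
  have hDsub : D ⊆ F := Subtype.coe_image_subset _ _
  have hpD : p ∈ D := ⟨p', mem_connectedComponent, rfl⟩
  refine ⟨D, hDcomp, hDconn, hDsub, hpD, ?_⟩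
  by_contra hz
  push_neg at hz
  set bd : Set ↥F := {q : ↥F | (q : X) ∉ B} with hbd
  have hbdclosed : IsClosed bd := by
    have : bd = Subtype.val ⁻¹' Bᶜ := rfl
    rw [this]
    exact (Metric.isOpen_ball.isClosed_compl).preimage continuous_subtype_val
  have hbdcomp : IsCompact bd := hbdclosed.isCompact
  have hcompeq := connectedComponent_eq_iInter_isClopen p'
  have hempty : bd ∩ ⋂ Z : {Z : Set ↥F // IsClopen Z ∧ p' ∈ Z}, (Z : Set ↥F) = ∅ := by
    rw [← hcompeq]
    ext q
    simp only [Set.mem_inter_iff, Set.mem_empty_iff_false, iff_false, not_and]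
    intro hq hq'
    exact hq (hz q ⟨q, hq', rfl⟩)
  obtain ⟨t, ht⟩ := hbdcomp.elim_finite_subfamily_closed _
    (fun Z => Z.2.1.isClosed) hempty
  set V' : Set ↥F := ⋂ Z ∈ t, (Z : Set ↥F) with hV'
  have hV'clopen : IsClopen V' := by
    apply Set.Finite.isClopen_biInter t.finite_toSet
    exact fun Z _ => Z.2.1
  have hpV' : p' ∈ V' := Set.mem_iInter₂.mpr fun Z _ => Z.2.2
  have hV'ball : ∀ q ∈ V', (q : X) ∈ B := by
    intro q hq
    by_contra hqb
    exact Set.eq_empty_iff_forall_notMem.mp ht q ⟨hqb, hq⟩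
  obtain ⟨U, hU, hUV⟩ := isOpen_induced_iff.mp hV'clopen.isOpen
  set V : Set X := Subtype.val '' V' with hV
  have hVF : V ⊆ F := Subtype.coe_image_subset _ _
  have hVclosed : IsClosed V :=
    ((hV'clopen.isClosed.isCompact).image continuous_subtype_val).isClosed
  have hVeq : V = (U ∩ B) ∩ C := by
    ext v
    constructor
    · rintro ⟨q, hq, rfl⟩
      refine ⟨⟨?_, hV'ball q hq⟩, (hVF ⟨q, hq, rfl⟩).1⟩
      have : q ∈ Subtype.val ⁻¹' U := by rw [hUV]; exact hq
      exact this
    · rintro ⟨⟨hvU, hvB⟩, hvC⟩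
      have hvF : v ∈ F := ⟨hvC, subset_closure hvB⟩
      refine ⟨⟨v, hvF⟩, ?_, rfl⟩
      have : (⟨v, hvF⟩ : ↥F) ∈ Subtype.val ⁻¹' U := hvU
      rw [hUV] at this; exact this
  obtain ⟨w, hwC, hwB⟩ := hw
  have hsep := hconn.isPreconnected (U ∩ B) Vᶜ
    (hU.inter Metric.isOpen_ball) hVclosed.isOpen_compl
    (by
      intro c hc
      by_cases hcV : c ∈ V
      · left; rw [hVeq] at hcV; exact hcV.1
      · right; exact hcV)
    ⟨p, hp, by
      have : p ∈ V := ⟨p', hpV', rfl⟩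
      rw [hVeq] at this; exact this.1⟩
    ⟨w, hwC, fun hwV => hwB ((hVF hwV).2)⟩
  obtain ⟨q, hqC, hqU, hqV⟩ := hsep
  exact hqV (by rw [hVeq]; exact ⟨hqU, hqC⟩)

/-- Let `(X,d)` be a Ptolemaic metric space, `x₀ ∈ X`, `a > 0`.
Let `F` be a nondegenerate continuum in `X`, let `C` be a continuum contained in
`X \ F` with chordal diameter `h_{x₀}(C) ≥ a`, and let `R > 0` satisfy
`h_{x₀}(X \ B(x₀,R)) < a/2`.  Then there is a continuum
`C₁ ⊆ C ∩ cl(B(x₀,R))` with `h_{x₀}(C₁) ≥ a/4`. -/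
theorem statement8 {X : Type*} [MetricSpace X]
    (hPt : ∀ x y z t : X, dist x y * dist z t ≤ dist x z * dist y t + dist x t * dist y z)
    (x₀ : X) (h : X → X → ℝ)
    (hh : ∀ x y : X, h x y =
      dist x y / (Real.sqrt (1 + dist x x₀ ^ 2) * Real.sqrt (1 + dist y x₀ ^ 2)))
    (a R : ℝ) (ha : 0 < a) (hR : 0 < R)
    (F C : Set X)
    (hFcomp : IsCompact F) (hFconn : IsConnected F) (hFnd : ∃ u ∈ F, ∃ v ∈ F, u ≠ v)
    (hCcomp : IsCompact C) (hCconn : IsConnected C) (hCF : C ⊆ Fᶜ)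
    (hCdiam : a ≤ ⨆ q : C × C, h q.1 q.2)
    (hRdiam : (⨆ q : ((Metric.ball x₀ R)ᶜ : Set X) × ((Metric.ball x₀ R)ᶜ : Set X),
        h q.1 q.2) < a / 2) :
    ∃ C₁ ⊆ C ∩ closure (Metric.ball x₀ R),
      IsCompact C₁ ∧ IsConnected C₁ ∧ a / 4 ≤ ⨆ q : C₁ × C₁, h q.1 q.2 := by
  -- basic bounds on h
  have hle2 : ∀ u v : X, h u v ≤ 2 := by
    intro u v
    rw [hh]
    set su := Real.sqrt (1 + dist u x₀ ^ 2) with hsu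
    set sv := Real.sqrt (1 + dist v x₀ ^ 2) with hsv
    have h1 : dist u x₀ ≤ su := statement8_le_sqrt_self _ dist_nonneg
    have h2 : dist v x₀ ≤ sv := statement8_le_sqrt_self _ dist_nonneg
    have h3 : (1:ℝ) ≤ su := statement8_sqrt_one_le _
    have h4 : (1:ℝ) ≤ sv := statement8_sqrt_one_le _
    rw [div_le_iff₀ (by positivity)]
    have h5 : dist u v ≤ dist u x₀ + dist v x₀ := by
      rw [dist_comm v x₀]; exact dist_triangle u x₀ v
    nlinarith
  have hbdd : ∀ s : Set X, BddAbove (Set.range fun q : s × s => h q.1 q.2) := by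
    intro s
    refine ⟨2, ?_⟩
    rintro v ⟨q, rfl⟩
    exact hle2 _ _
  have hpair : ∀ (s : Set X) (p : X), p ∈ s → ∀ q ∈ s,
      h p q ≤ ⨆ r : s × s, h r.1 r.2 := by
    intro s p hp q hq
    exact le_ciSup (hbdd s) (⟨⟨p, hp⟩, ⟨q, hq⟩⟩ : s × s)
  have htri : ∀ u v w : X, h u v ≤ h u w + h w v := by
    intro u v w
    rw [hh, hh, hh]
    exact statement8_chordal_tri hPt x₀ u v w
  -- extract a maximizing pair
  have hCne : C.Nonempty := hCconn.nonempty
  haveI : Nonempty ↥C := hCne.to_subtype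
  have hcont : Continuous fun q : X × X => h q.1 q.2 := by
    have heq : (fun q : X × X => h q.1 q.2) = fun q : X × X =>
        dist q.1 q.2 / (Real.sqrt (1 + dist q.1 x₀ ^ 2) * Real.sqrt (1 + dist q.2 x₀ ^ 2)) := by
      funext q; exact hh q.1 q.2
    rw [heq]
    apply Continuous.div continuous_dist
    · apply Continuous.mul
      · exact Real.continuous_sqrt.comp (by fun_prop)
      · exact Real.continuous_sqrt.comp (by fun_prop)
    · intro q; positivity
  obtain ⟨z, hz, hmax⟩ := (hCcomp.prod hCcomp).exists_isMaxOn (hCne.prod hCne)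
    hcont.continuousOn
  have hsup : (⨆ q : C × C, h q.1 q.2) ≤ h z.1 z.2 :=
    ciSup_le fun q => hmax (a := (q.1.1, q.2.1)) ⟨q.1.2, q.2.2⟩
  have hxy : a ≤ h z.1 z.2 := hCdiam.trans hsup
  set x := z.1 with hxdef
  set y := z.2 with hydef
  have hxC : x ∈ C := hz.1
  have hyC : y ∈ C := hz.2
  by_cases hsub : C ⊆ closure (Metric.ball x₀ R)
  · exact ⟨C, fun c hc => ⟨hc, hsub hc⟩, hCcomp, hCconn, by linarith⟩
  · rw [Set.not_subset] at hsub
    by_cases hxb : x ∈ Metric.ball x₀ R <;> by_cases hyb : y ∈ Metric.ball x₀ R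
    · -- both in the ball
      obtain ⟨Dx, hDxc, hDxconn, hDxsub, hxDx, zx, hzxDx, hzxb⟩ :=
        statement8_bump hCcomp hCconn hxC hxb hsub
      obtain ⟨Dy, hDyc, hDyconn, hDysub, hyDy, zy, hzyDy, hzyb⟩ :=
        statement8_bump hCcomp hCconn hyC hyb hsub
      have hzz : h zx zy < a / 2 :=
        lt_of_le_of_lt (hpair _ zx hzxb zy hzyb) hRdiam
      have t1 : h x y ≤ h x zx + h zx y := htri x y zx
      have t2 : h zx y ≤ h zx zy + h zy y := htri zx y zy
      rcases le_or_gt (a/4) (h x zx) with hc | hc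
      · refine ⟨Dx, hDxsub, hDxc, hDxconn, ?_⟩
        have := hpair Dx x hxDx zx hzxDx
        linarith
      · refine ⟨Dy, hDysub, hDyc, hDyconn, ?_⟩
        have := hpair Dy zy hzyDy y hyDy
        linarith
    · -- x in ball, y outside
      obtain ⟨Dx, hDxc, hDxconn, hDxsub, hxDx, zx, hzxDx, hzxb⟩ :=
        statement8_bump hCcomp hCconn hxC hxb hsub
      have hzz : h zx y < a / 2 :=
        lt_of_le_of_lt (hpair _ zx hzxb y hyb) hRdiam
      have t1 : h x y ≤ h x zx + h zx y := htri x y zx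
      refine ⟨Dx, hDxsub, hDxc, hDxconn, ?_⟩
      have := hpair Dx x hxDx zx hzxDx
      linarith
    · -- y in ball, x outside
      obtain ⟨Dy, hDyc, hDyconn, hDysub, hyDy, zy, hzyDy, hzyb⟩ :=
        statement8_bump hCcomp hCconn hyC hyb hsub
      have hzz : h x zy < a / 2 :=
        lt_of_le_of_lt (hpair _ x hxb zy hzyb) hRdiam
      have t1 : h x y ≤ h x zy + h zy y := htri x y zy
      refine ⟨Dy, hDysub, hDyc, hDyconn, ?_⟩
      have := hpair Dy zy hzyDy y hyDy
      linarith
    · -- both outside: contradiction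
      exfalso
      have := lt_of_le_of_lt (hpair _ x hxb y hyb) hRdiam
      linarith
end

section
/- Let (X,d) be a metric space, x₀ ∈ X, R > 0, and let C be a compact connected subset of X. Suppose ζ₀ ∈ C with d(ζ₀,x₀) < R, and suppose C contains a point outside the closed ball cl(B(x₀,R)). Then the connected component of ζ₀ in C ∩ cl(B(x₀,R)) contains a point z₁ with d(z₁,x₀) = R. -/
/-!
Boundary bumping. If the component of `ζ₀` in `K = C ∩ cl(B(x₀,R))` missed the sphere, then,
since components of a compact Hausdorff space are intersections of clopen sets, some relatively
clopen `V ⊆ K` around `ζ₀` would miss it too. Such a `V` lies in the open ball, so it is open in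
`C` as well as closed; it does not contain the point of `C` outside the closed ball,
contradicting the connectedness of `C`.
-/

open Set Topology

theorem exists_isClopen_mem_subset_of_connectedComponent_subset {X : Type*}
    [TopologicalSpace X] [T2Space X] [CompactSpace X] {x : X} {U : Set X} (hU : IsOpen U)
    (hxU : connectedComponent x ⊆ U) : ∃ V, IsClopen V ∧ x ∈ V ∧ V ⊆ U := by
  let ι := {s : Set X // IsClopen s ∧ x ∈ s}
  have : Nonempty ι := ⟨⟨univ, isClopen_univ, mem_univ x⟩⟩
  obtain ⟨⟨V, hV, hxV⟩, hVU⟩ :=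
    exists_subset_nhds_of_compactSpace (V := fun s : ι => s.1)
      (fun s t => ⟨⟨s.1 ∩ t.1, s.2.1.inter t.2.1, s.2.2, t.2.2⟩,
        inter_subset_left, inter_subset_right⟩)
      (fun s => s.2.1.1)
      (fun y hy => hU.mem_nhds (hxU ((connectedComponent_eq_iInter_isClopen x).symm ▸ hy)))
  exact ⟨V, hV, hxV, hVU⟩

theorem IsCompact.exists_isOpen_isClosed_inter_subset_of_connectedComponentIn_subset
    {X : Type*} [TopologicalSpace X] [T2Space X] {K U : Set X} (hK : IsCompact K) (hU : IsOpen U)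
    {x : X} (hxK : x ∈ K) (hxU : connectedComponentIn K x ⊆ U) :
    ∃ W, IsOpen W ∧ x ∈ W ∧ IsClosed (K ∩ W) ∧ K ∩ W ⊆ U := by
  have : CompactSpace K := isCompact_iff_compactSpace.1 hK
  have hcomp : connectedComponent (⟨x, hxK⟩ : K) ⊆ Subtype.val ⁻¹' U := fun y hy =>
    hxU ((connectedComponentIn_eq_image hxK).symm ▸ mem_image_of_mem _ hy)
  obtain ⟨V, hV, hxV, hVU⟩ :=
    exists_isClopen_mem_subset_of_connectedComponent_subset (hU.preimage continuous_subtype_val)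
      hcomp
  obtain ⟨W, hW, rfl⟩ := isOpen_induced_iff.1 hV.isOpen
  have hKW : Subtype.val '' (Subtype.val ⁻¹' W : Set K) = K ∩ W :=
    Subtype.image_preimage_coe K W
  refine ⟨W, hW, hxV, ?_, ?_⟩
  · rw [← hKW]
    exact (hV.isClosed.isCompact.image continuous_subtype_val).isClosed
  · rw [← hKW]
    exact image_subset_iff.2 hVU

theorem IsCompact.exists_mem_connectedComponentIn_inter_closure_frontier {X : Type*}
    [TopologicalSpace X] [T2Space X] {C U : Set X} (hC : IsCompact C) (hCconn : IsPreconnected C)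
    (hU : IsOpen U) {x : X} (hxC : x ∈ C) (hxU : x ∈ U) (hCU : ¬ C ⊆ U) :
    ∃ z ∈ connectedComponentIn (C ∩ closure U) x, z ∈ frontier U := by
  by_contra! h
  set K := C ∩ closure U
  have hK : IsCompact K := hC.inter_right isClosed_closure
  obtain ⟨W, hW, hxW, hclosed, hfrontier⟩ :=
    hK.exists_isOpen_isClosed_inter_subset_of_connectedComponentIn_subset
      isClosed_frontier.isOpen_compl ⟨hxC, subset_closure hxU⟩ h
  have hsubU : K ∩ W ⊆ U := fun z hz => by
    rw [← hU.interior_eq, ← closure_sdiff_frontier]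
    exact ⟨hz.1.2, hfrontier hz⟩
  have hmem : ∀ z ∈ C, z ∈ W → z ∈ U → z ∈ K ∩ W := fun z hzC hzW hzU =>
    ⟨⟨hzC, subset_closure hzU⟩, hzW⟩
  have hcover : C ⊆ (W ∩ U) ∪ (K ∩ W)ᶜ := fun z _ =>
    or_iff_not_imp_right.2 fun hz => ⟨(not_not.1 hz).2, hsubU (not_not.1 hz)⟩
  have hdisj : C ∩ ((W ∩ U) ∩ (K ∩ W)ᶜ) = ∅ :=
    eq_empty_of_forall_notMem fun z hz => hz.2.2 (hmem z hz.1 hz.2.1.1 hz.2.1.2)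
  rcases isPreconnected_iff_subset_of_disjoint.1 hCconn _ _ (hW.inter hU) hclosed.isOpen_compl
      hcover hdisj with hCin | hCout
  · exact hCU (hCin.trans inter_subset_right)
  · exact hCout hxC (hmem x hxC hxW hxU)

theorem statement9_general {X : Type*} [MetricSpace X] (x₀ : X) (R : ℝ)
    (C : Set X) (hCcomp : IsCompact C) (hCconn : IsPreconnected C)
    (ζ₀ : X) (hζ₀ : ζ₀ ∈ C) (hζ₀R : dist ζ₀ x₀ < R)
    (hout : ∃ w ∈ C, w ∉ closure (Metric.ball x₀ R)) :
    ∃ z₁ ∈ connectedComponentIn (C ∩ closure (Metric.ball x₀ R)) ζ₀,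
      dist z₁ x₀ = R := by
  obtain ⟨w, hwC, hw⟩ := hout
  obtain ⟨z, hz, hzR⟩ := hCcomp.exists_mem_connectedComponentIn_inter_closure_frontier hCconn
    Metric.isOpen_ball hζ₀ hζ₀R fun hC => hw (subset_closure (hC hwC))
  exact ⟨z, hz, Metric.frontier_ball_subset_sphere hzR⟩

/-- Let `(X,d)` be a metric space, `x₀ ∈ X`, `R > 0`, and let `C` be a
compact connected subset of `X`.  Suppose `ζ₀ ∈ C` with `d(ζ₀,x₀) < R`, and `C` contains
a point outside `cl(B(x₀,R))`.  Then the connected component of `ζ₀` in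
`C ∩ cl(B(x₀,R))` contains a point `z₁` with `d(z₁,x₀) = R`. -/
theorem statement9 {X : Type*} [MetricSpace X] (x₀ : X) (R : ℝ) (hR : 0 < R)
    (C : Set X) (hCcomp : IsCompact C) (hCconn : IsPreconnected C)
    (ζ₀ : X) (hζ₀ : ζ₀ ∈ C) (hζ₀R : dist ζ₀ x₀ < R)
    (hout : ∃ w ∈ C, w ∉ closure (Metric.ball x₀ R)) :
    ∃ z₁ ∈ connectedComponentIn (C ∩ closure (Metric.ball x₀ R)) ζ₀,
      dist z₁ x₀ = R :=
  statement9_general x₀ R C hCcomp hCconn ζ₀ hζ₀ hζ₀R hout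
end

section
/- Let (X,d) be a Ptolemaic metric space and x₀ ∈ X. Define on X̄ := X ∪ {∞} the function h̄ by h̄(x,y) := h_{x₀}(x,y) for x, y ∈ X, h̄(x,∞) = h̄(∞,x) := 1/√(1 + d(x₀,x)²) for x ∈ X, and h̄(∞,∞) := 0. Then h̄ is a metric on X̄: it is nonnegative, symmetric, vanishes exactly on the diagonal, and satisfies the triangle inequality. -/
lemma aux_one_le (a : ℝ) : 1 ≤ Real.sqrt (1 + a ^ 2) := by
  have := Real.sqrt_le_sqrt (show (1:ℝ) ≤ 1 + a ^ 2 by nlinarith [sq_nonneg a])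
  simpa using this

lemma aux_le_sqrt (a : ℝ) (ha : 0 ≤ a) : a ≤ Real.sqrt (1 + a ^ 2) := by
  have := Real.sqrt_le_sqrt (show a ^ 2 ≤ 1 + a ^ 2 by linarith)
  rwa [Real.sqrt_sq ha] at this

lemma aux_lip (a b d : ℝ) (ha : 0 ≤ a) (hb : 0 ≤ b) (hd : 0 ≤ d) (h : b ≤ a + d) :
    Real.sqrt (1 + b ^ 2) ≤ Real.sqrt (1 + a ^ 2) + d := by
  have h1 := aux_le_sqrt a ha
  have h2 : Real.sqrt (1 + a ^ 2) ^ 2 = 1 + a ^ 2 := Real.sq_sqrt (by positivity)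
  have h3 : Real.sqrt (1 + b ^ 2) ^ 2 = 1 + b ^ 2 := Real.sq_sqrt (by positivity)
  nlinarith [Real.sqrt_nonneg (1 + b ^ 2), Real.sqrt_nonneg (1 + a ^ 2),
    mul_nonneg hd (Real.sqrt_nonneg (1 + a ^ 2)), sq_nonneg (a + d)]

lemma aux_mink (u1 u2 v1 v2 : ℝ) :
    Real.sqrt ((u1 + v1) ^ 2 + (u2 + v2) ^ 2) ≤
      Real.sqrt (u1 ^ 2 + u2 ^ 2) + Real.sqrt (v1 ^ 2 + v2 ^ 2) := by
  have := norm_add_le (⟨u1, u2⟩ : ℂ) ⟨v1, v2⟩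
  simpa [Complex.norm_def, Complex.normSq_apply, Complex.add_re, Complex.add_im, sq] using this

lemma aux_mul_sqrt (d e : ℝ) (hd : 0 ≤ d) :
    d * Real.sqrt (1 + e ^ 2) = Real.sqrt (d ^ 2 + (d * e) ^ 2) := by
  rw [show d ^ 2 + (d * e) ^ 2 = d ^ 2 * (1 + e ^ 2) by ring,
    Real.sqrt_mul (sq_nonneg d), Real.sqrt_sq hd]

/-- The key multiplied-out triangle inequality from Ptolemy. -/
lemma aux_key3 {X : Type*} [MetricSpace X]
    (hPt : ∀ x y z t : X, dist x y * dist z t ≤ dist x z * dist y t + dist x t * dist y z)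
    (x₀ x y z : X) :
    dist x z * Real.sqrt (1 + dist y x₀ ^ 2) ≤
      dist x y * Real.sqrt (1 + dist z x₀ ^ 2) +
      dist y z * Real.sqrt (1 + dist x x₀ ^ 2) := by
  have hp : dist x z * dist y x₀ ≤ dist x y * dist z x₀ + dist x x₀ * dist z y := hPt x z y x₀
  have hp' : dist x z * dist y x₀ ≤ dist x y * dist z x₀ + dist y z * dist x x₀ := by
    rw [dist_comm z y] at hp; linarith
  have ht : dist x z ≤ dist x y + dist y z := dist_triangle x y z
  rw [aux_mul_sqrt _ _ dist_nonneg, aux_mul_sqrt _ _ dist_nonneg, aux_mul_sqrt _ _ dist_nonneg]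
  calc Real.sqrt (dist x z ^ 2 + (dist x z * dist y x₀) ^ 2)
      ≤ Real.sqrt ((dist x y + dist y z) ^ 2 +
          (dist x y * dist z x₀ + dist y z * dist x x₀) ^ 2) := by
        apply Real.sqrt_le_sqrt
        have h1 : dist x z ^ 2 ≤ (dist x y + dist y z) ^ 2 := by
          nlinarith [dist_nonneg (x := x) (y := z)]
        have h2 : (dist x z * dist y x₀) ^ 2 ≤
            (dist x y * dist z x₀ + dist y z * dist x x₀) ^ 2 := by
          have hn : (0:ℝ) ≤ dist x z * dist y x₀ := mul_nonneg dist_nonneg dist_nonneg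
          nlinarith
        linarith
    _ ≤ Real.sqrt (dist x y ^ 2 + (dist x y * dist z x₀) ^ 2) +
          Real.sqrt (dist y z ^ 2 + (dist y z * dist x x₀) ^ 2) :=
        aux_mink _ _ _ _

/-- Let `(X,d)` be a Ptolemaic metric space and `x₀ ∈ X`.  Define on
`X̄ = X ∪ {∞}` (formalized as `Option X`, with `none` playing the role of `∞`) the
function `h̄` by `h̄(x,y) = h_{x₀}(x,y)` for `x, y ∈ X`,
`h̄(x,∞) = h̄(∞,x) = 1/√(1+d(x₀,x)²)`, and `h̄(∞,∞) = 0`.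
Then `h̄` is a metric on `X̄`. -/
theorem statement11 {X : Type*} [MetricSpace X]
    (hPt : ∀ x y z t : X, dist x y * dist z t ≤ dist x z * dist y t + dist x t * dist y z)
    (x₀ : X) (hbar : Option X → Option X → ℝ)
    (hbar_some : ∀ x y : X, hbar (some x) (some y) =
      dist x y / (Real.sqrt (1 + dist x x₀ ^ 2) * Real.sqrt (1 + dist y x₀ ^ 2)))
    (hbar_inf₁ : ∀ x : X, hbar (some x) none = 1 / Real.sqrt (1 + dist x₀ x ^ 2))
    (hbar_inf₂ : ∀ x : X, hbar none (some x) = 1 / Real.sqrt (1 + dist x₀ x ^ 2))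
    (hbar_inf : hbar none none = 0) :
    (∀ a b : Option X, 0 ≤ hbar a b) ∧
    (∀ a b : Option X, hbar a b = hbar b a) ∧
    (∀ a b : Option X, hbar a b = 0 ↔ a = b) ∧
    (∀ a b c : Option X, hbar a c ≤ hbar a b + hbar b c) := by
  have hinf₁ : ∀ x : X, hbar (some x) none = 1 / Real.sqrt (1 + dist x x₀ ^ 2) := by
    intro x; rw [hbar_inf₁, dist_comm x₀ x]
  have hinf₂ : ∀ x : X, hbar none (some x) = 1 / Real.sqrt (1 + dist x x₀ ^ 2) := by
    intro x; rw [hbar_inf₂, dist_comm x₀ x]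
  have hFpos : ∀ x : X, 0 < Real.sqrt (1 + dist x x₀ ^ 2) := fun x =>
    lt_of_lt_of_le one_pos (aux_one_le _)
  refine ⟨?_, ?_, ?_, ?_⟩
  · rintro (_ | a) (_ | b)
    · simp [hbar_inf]
    · rw [hinf₂]; positivity
    · rw [hinf₁]; positivity
    · rw [hbar_some]
      have := hFpos a; have := hFpos b
      positivity
  · rintro (_ | a) (_ | b)
    · rfl
    · rw [hinf₂, hinf₁]
    · rw [hinf₁, hinf₂]
    · rw [hbar_some, hbar_some, dist_comm, mul_comm]
  · rintro (_ | a) (_ | b)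
    · simp [hbar_inf]
    · rw [hinf₂]
      simp [ne_of_gt (hFpos b)]
    · rw [hinf₁]
      simp [ne_of_gt (hFpos a)]
    · rw [hbar_some]
      rw [div_eq_zero_iff]
      have := (hFpos a).ne'; have := (hFpos b).ne'
      simp only [mul_eq_zero]
      constructor
      · rintro (h | h | h)
        · simp [dist_eq_zero.mp h]
        · exact absurd h ‹_›
        · exact absurd h ‹_›
      · rintro h
        left
        simp only [Option.some.injEq] at h
        simp [h]
  · rintro (_ | x) (_ | y) (_ | z)
    · simp [hbar_inf]
    · rw [hbar_inf]
      have h1 := hinf₂ z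
      have := hFpos z
      nlinarith [hinf₂ z]
    · rw [hbar_inf]
      have := hFpos y
      rw [hinf₂ y, hinf₁ y]
      positivity
    · -- none, some y, some z : 1/F z ≤ 1/F y + dist y z/(F y F z)
      rw [hinf₂ z, hinf₂ y, hbar_some]
      have hy := hFpos y; have hz := hFpos z
      have key : Real.sqrt (1 + dist y x₀ ^ 2) ≤
          Real.sqrt (1 + dist z x₀ ^ 2) + dist y z := by
        apply aux_lip _ _ _ dist_nonneg dist_nonneg dist_nonneg
        calc dist y x₀ ≤ dist y z + dist z x₀ := dist_triangle y z x₀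
          _ = dist z x₀ + dist y z := by ring
      rw [div_add_div _ _ (ne_of_gt hy) (ne_of_gt (mul_pos hy hz)),
        div_le_div_iff₀ hz (mul_pos hy (mul_pos hy hz))]
      nlinarith [mul_le_mul_of_nonneg_right key (mul_pos hy hz).le, dist_nonneg (x := y) (y := z)]
    · -- some x, none, none
      simp [hbar_inf, hinf₁ x]
    · -- some x, none, some z : dist x z/(F x F z) ≤ 1/F x + 1/F z
      rw [hbar_some, hinf₁ x, hinf₂ z]
      have hx := hFpos x; have hz := hFpos z
      have key : dist x z ≤ Real.sqrt (1 + dist z x₀ ^ 2) + Real.sqrt (1 + dist x x₀ ^ 2) := by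
        calc dist x z ≤ dist x x₀ + dist x₀ z := dist_triangle x x₀ z
          _ ≤ Real.sqrt (1 + dist x x₀ ^ 2) + Real.sqrt (1 + dist z x₀ ^ 2) := by
              have h1 := aux_le_sqrt (dist x x₀) dist_nonneg
              have h2 := aux_le_sqrt (dist z x₀) dist_nonneg
              rw [dist_comm x₀ z]; linarith
          _ = _ := by ring
      rw [div_add_div _ _ (ne_of_gt hx) (ne_of_gt hz),
        div_le_div_iff₀ (mul_pos hx hz) (mul_pos hx hz)]
      nlinarith [mul_le_mul_of_nonneg_right key (mul_pos hx hz).le]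
    · -- some x, some y, none : 1/F x ≤ dist x y/(F x F y) + 1/F y
      rw [hinf₁ x, hbar_some, hinf₁ y]
      have hx := hFpos x; have hy := hFpos y
      have key : Real.sqrt (1 + dist y x₀ ^ 2) ≤
          Real.sqrt (1 + dist x x₀ ^ 2) + dist x y := by
        apply aux_lip _ _ _ dist_nonneg dist_nonneg dist_nonneg
        calc dist y x₀ ≤ dist y x + dist x x₀ := dist_triangle y x x₀
          _ = dist x x₀ + dist x y := by rw [dist_comm y x]; ring
      rw [div_add_div _ _ (ne_of_gt (mul_pos hx hy)) (ne_of_gt hy),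
        div_le_div_iff₀ hx (mul_pos (mul_pos hx hy) hy)]
      nlinarith [mul_le_mul_of_nonneg_right key (mul_pos hx hy).le, dist_nonneg (x := x) (y := y)]
    · -- some x, some y, some z
      rw [hbar_some, hbar_some, hbar_some]
      have hx := hFpos x; have hy := hFpos y; have hz := hFpos z
      have key := aux_key3 hPt x₀ x y z
      rw [div_add_div _ _ (ne_of_gt (mul_pos hx hy)) (ne_of_gt (mul_pos hy hz)),
        div_le_div_iff₀ (mul_pos hx hz) (mul_pos (mul_pos hx hy) (mul_pos hy hz))]
      nlinarith [mul_le_mul_of_nonneg_right key (mul_pos hx (mul_pos hy hz)).le,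
        dist_nonneg (x := x) (y := z), dist_nonneg (x := x) (y := y),
        dist_nonneg (x := y) (y := z)]
end

section
/- Let X and Y be metric spaces, let D ⊆ X be open, and let f : D → Y be continuous and discrete (i.e., for every y ∈ Y the fiber f⁻¹(y) is a discrete subset of D). Let α : [a,c) → D be a continuous curve such that the closure of its image α([a,c)) is compact and contained in D, and suppose f(α(t)) converges to some point y₀ ∈ Y as t → c⁻. Then α(t) converges as t → c⁻ to some point x* ∈ D, and f(x*) = y₀; that is, α extends to a continuous curve ᾱ : [a,c] → D with f(ᾱ(c)) = y₀. -/
open Filter Set Metric Topology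

/-!
Every cluster point of `α` at `c⁻` in the compact set `K = closure (α '' [a, c))` lies in the
fibre `D ∩ f⁻¹(y₀)`, by continuity of `f`. If `x`, `z` are two cluster points and
`0 < r < dist z x`, the curve crosses the sphere `S(x, r)` arbitrarily close to `c`
(intermediate value theorem), so by compactness some cluster point lies on `S(x, r)`.
As `x` is isolated in the fibre, this forces `z = x`; and a filter eventually in a compact set
with a unique cluster point converges to it.
-/

theorem ContinuousOn.eq_of_mapClusterPt {X Y ι : Type*} [TopologicalSpace X] [TopologicalSpace Y]
    [T2Space Y] {l : Filter ι} {u : ι → X} {f : X → Y} {D : Set X} {x : X} {y : Y}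
    (hf : ContinuousOn f D) (hx : x ∈ D) (huD : ∀ᶠ t in l, u t ∈ D)
    (hfu : Tendsto (f ∘ u) l (𝓝 y)) (hxu : MapClusterPt x l u) : f x = y := by
  have hfx : MapClusterPt (f x) l (f ∘ u) :=
    hxu.tendsto_comp' ((hf x hx).mono_left (inf_le_inf_left _ (le_principal_iff.2 huD)))
  exact eq_of_nhds_neBot (NeBot.mono hfx (inf_le_inf_left _ hfu))

theorem frequently_eq_of_frequently_le_of_frequently_ge {g : ℝ → ℝ} {a c r : ℝ} (hac : a < c)
    (hg : ContinuousOn g (Ioo a c)) (hle : ∃ᶠ t in 𝓝[<] c, g t ≤ r)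
    (hge : ∃ᶠ t in 𝓝[<] c, r ≤ g t) : ∃ᶠ t in 𝓝[<] c, g t = r := by
  rw [(nhdsLT_basis c).frequently_iff] at hle hge ⊢
  intro b hb
  obtain ⟨t₁, ht₁, hgt₁⟩ := hle (max a b) (max_lt hac hb)
  obtain ⟨t₂, ht₂, hgt₂⟩ := hge t₁ ht₁.2
  have hsub : Icc t₁ t₂ ⊆ Ioo a c := fun s hs =>
    ⟨(le_max_left a b).trans_lt (ht₁.1.trans_le hs.1), hs.2.trans_lt ht₂.2⟩
  obtain ⟨s, hs, hgs⟩ := intermediate_value_Icc ht₂.1.le (hg.mono hsub) ⟨hgt₁, hgt₂⟩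
  exact ⟨s, ⟨(le_max_right a b).trans_lt (ht₁.1.trans_le hs.1), hs.2.trans_lt ht₂.2⟩, hgs⟩

theorem exists_mapClusterPt_mem_sphere {X : Type*} [PseudoMetricSpace X] {α : ℝ → X} {a c r : ℝ}
    {K : Set X} {x z : X} (hac : a < c) (hα : ContinuousOn α (Ioo a c)) (hK : IsCompact K)
    (hαK : ∀ᶠ t in 𝓝[<] c, α t ∈ K) (hx : MapClusterPt x (𝓝[<] c) α)
    (hz : MapClusterPt z (𝓝[<] c) α) (hr : 0 < r) (hrz : r < dist z x) :
    ∃ w ∈ K ∩ sphere x r, MapClusterPt w (𝓝[<] c) α := by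
  have hnear : ∃ᶠ t in 𝓝[<] c, dist (α t) x ≤ r :=
    (hx.frequently (ball_mem_nhds x hr)).mono fun t ht => (mem_ball.1 ht).le
  have hfar : ∃ᶠ t in 𝓝[<] c, r ≤ dist (α t) x :=
    (hz.frequently (ball_mem_nhds z (sub_pos.2 hrz))).mono fun t ht => by
      linarith [dist_triangle_left z x (α t), mem_ball.1 ht]
  have hsphere := frequently_eq_of_frequently_le_of_frequently_ge hac
    ((continuous_id.dist continuous_const).comp_continuousOn hα) hnear hfar
  exact (hK.inter_right isClosed_sphere).exists_mapClusterPt_of_frequently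
    ((hsphere.and_eventually hαK).mono fun t ht => ⟨ht.2, mem_sphere.2 ht.1⟩)

theorem eq_of_mapClusterPt_of_not_accPt {X : Type*} [MetricSpace X] {α : ℝ → X}
    {a c : ℝ} {K S : Set X} {x z : X} (hac : a < c) (hα : ContinuousOn α (Ioo a c))
    (hK : IsCompact K) (hαK : ∀ᶠ t in 𝓝[<] c, α t ∈ K)
    (hS : ∀ w ∈ K, MapClusterPt w (𝓝[<] c) α → w ∈ S) (hxS : ¬AccPt x (𝓟 S))
    (hx : MapClusterPt x (𝓝[<] c) α) (hz : MapClusterPt z (𝓝[<] c) α) : z = x := by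
  by_contra hzx
  rw [accPt_iff_nhds] at hxS
  push Not at hxS
  obtain ⟨U, hU, hUS⟩ := hxS
  obtain ⟨ε, hε, hεU⟩ := Metric.mem_nhds_iff.1 hU
  obtain ⟨r, hr, hrε, hrz⟩ : ∃ r, 0 < r ∧ r < ε ∧ r < dist z x := by
    obtain ⟨r, hr, hrmin⟩ := exists_between (lt_min hε (dist_pos.2 hzx))
    exact ⟨r, hr, lt_min_iff.1 hrmin⟩
  obtain ⟨w, ⟨hwK, hw⟩, hwc⟩ := exists_mapClusterPt_mem_sphere hac hα hK hαK hx hz hr hrz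
  have hwU : w ∈ U := hεU (mem_ball.2 ((mem_sphere.1 hw).trans_lt hrε))
  exact ne_of_mem_sphere hw hr.ne' (hUS w ⟨hwU, hS w hwK hwc⟩)

theorem statement16_general {X Y : Type*} [MetricSpace X] [MetricSpace Y]
    (D : Set X) (f : X → Y) (hf : ContinuousOn f D)
    (hdisc : ∀ y : Y, ∀ x ∈ D, ¬ AccPt x (Filter.principal (D ∩ f ⁻¹' {y})))
    (a c : ℝ) (hac : a < c) (α : ℝ → X)
    (hα : ContinuousOn α (Set.Ico a c))
    (hαD : ∀ t ∈ Set.Ico a c, α t ∈ D)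
    (hclcomp : IsCompact (closure (α '' Set.Ico a c)))
    (hclD : closure (α '' Set.Ico a c) ⊆ D)
    (y₀ : Y)
    (hlim : Filter.Tendsto (fun t => f (α t)) (nhdsWithin c (Set.Ico a c)) (nhds y₀)) :
    ∃ xstar ∈ D,
      Filter.Tendsto α (nhdsWithin c (Set.Ico a c)) (nhds xstar) ∧ f xstar = y₀ := by
  rw [nhdsWithin_Ico_eq_nhdsLT hac] at hlim ⊢
  have hIco : Ico a c ∈ 𝓝[<] c := Ico_mem_nhdsLT hac
  have hαK : ∀ᶠ t in 𝓝[<] c, α t ∈ closure (α '' Ico a c) :=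
    mem_of_superset hIco fun t ht => subset_closure (mem_image_of_mem α ht)
  have hfiber : ∀ w ∈ closure (α '' Ico a c), MapClusterPt w (𝓝[<] c) α →
      w ∈ D ∩ f ⁻¹' {y₀} := fun w hwK hw =>
    ⟨hclD hwK, hf.eq_of_mapClusterPt (hclD hwK) (mem_of_superset hIco hαD) hlim hw⟩
  obtain ⟨x, hxK, hx⟩ := hclcomp.exists_mapClusterPt_of_frequently hαK.frequently
  obtain ⟨hxD, hfx⟩ := hfiber x hxK hx
  refine ⟨x, hxD, hclcomp.tendsto_nhds_of_unique_mapClusterPt hαK fun z _ hz => ?_, hfx⟩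
  exact eq_of_mapClusterPt_of_not_accPt hac (hα.mono Ioo_subset_Ico_self) hclcomp hαK hfiber
    (hdisc y₀ x hxD) hx hz

/-- Let `X`, `Y` be metric spaces, `D ⊆ X` open, and `f : D → Y`
continuous and discrete (every fiber has no accumulation points in `D`).  Let
`α : [a,c) → D` be a continuous curve whose image has compact closure contained in `D`,
and suppose `f(α(t)) → y₀ ∈ Y` as `t → c⁻`.  Then `α(t)` converges as `t → c⁻` to some
`x* ∈ D` with `f(x*) = y₀`; that is, `α` extends to a continuous curve on `[a,c]` with
`f(ᾱ(c)) = y₀`. -/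
theorem statement16 {X Y : Type*} [MetricSpace X] [MetricSpace Y]
    (D : Set X) (hD : IsOpen D) (f : X → Y) (hf : ContinuousOn f D)
    (hdisc : ∀ y : Y, ∀ x ∈ D, ¬ AccPt x (Filter.principal (D ∩ f ⁻¹' {y})))
    (a c : ℝ) (hac : a < c) (α : ℝ → X)
    (hα : ContinuousOn α (Set.Ico a c))
    (hαD : ∀ t ∈ Set.Ico a c, α t ∈ D)
    (hclcomp : IsCompact (closure (α '' Set.Ico a c)))
    (hclD : closure (α '' Set.Ico a c) ⊆ D)
    (y₀ : Y)
    (hlim : Filter.Tendsto (fun t => f (α t)) (nhdsWithin c (Set.Ico a c)) (nhds y₀)) :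
    ∃ xstar ∈ D,
      Filter.Tendsto α (nhdsWithin c (Set.Ico a c)) (nhds xstar) ∧ f xstar = y₀ :=
  statement16_general D f hf hdisc a c hac α hα hαD hclcomp hclD y₀ hlim
end
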